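/- The Harmony mechanism satisfies ε-local differential privacy: for any v1, v2 ∈ [−1,1] and any output o ∈ {−(e^ε+1)/(e^ε−1), (e^ε+1)/(e^ε−1)}, Pr[Harmony(v1)=o] ≤ e^ε · Pr[Harmony(v2)=o]. -/

import Mathlib

open Real

/-- Output distribution of the Harmony mechanism: on input `v`, output
`(e^ε+1)/(e^ε−1)` (encoded `true`) with probability
`((1+v)/2)·(e^ε/(e^ε+1)) + ((1−v)/2)·(1/(e^ε+1))`, and `−(e^ε+1)/(e^ε−1)`
(encoded `false`) with the complementary probability. -/
noncomputable def harmonyProb (ε v : ℝ) (o : Bool) : ℝ :=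
  let q := (1 + v) / 2 * (exp ε / (exp ε + 1)) + (1 - v) / 2 * (1 / (exp ε + 1))
  if o then q else 1 - q

/-!
Both output probabilities have the form `(t e^ε + (1 - t)) / (e^ε + 1)` with `t ∈ [0, 1]`,
so they lie in `[1, e^ε] / (e^ε + 1)`, an interval whose endpoints have ratio exactly `e^ε`.
-/

open Set

theorem le_mul_of_mem_Icc_mul {m c x y : ℝ} (hc : 0 ≤ c) (hx : x ∈ Icc m (c * m))
    (hy : y ∈ Icc m (c * m)) : x ≤ c * y :=
  hx.2.trans (mul_le_mul_of_nonneg_left hy.1 hc)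

theorem convex_combination_mem_Icc_one {t c : ℝ} (ht : t ∈ Icc (0 : ℝ) 1) (hc : 1 ≤ c) :
    t * c + (1 - t) ∈ Icc 1 c := by
  obtain ⟨ht₀, ht₁⟩ := ht
  constructor <;> nlinarith

theorem harmonyProb_eq (ε v : ℝ) (o : Bool) :
    harmonyProb ε v o =
      ((if o then (1 + v) / 2 else (1 - v) / 2) * exp ε
        + (1 - if o then (1 + v) / 2 else (1 - v) / 2)) * (exp ε + 1)⁻¹ := by
  have hpos : exp ε + 1 ≠ 0 := by positivity
  cases o <;> simp only [harmonyProb, Bool.false_eq_true, if_true, if_false] <;> field_simp <;> ring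

theorem harmonyProb_mem_Icc {ε v : ℝ} (hε : 0 ≤ ε) (hv : v ∈ Icc (-1 : ℝ) 1) (o : Bool) :
    harmonyProb ε v o ∈ Icc (exp ε + 1)⁻¹ (exp ε * (exp ε + 1)⁻¹) := by
  have hweight : (if o then (1 + v) / 2 else (1 - v) / 2) ∈ Icc (0 : ℝ) 1 := by
    obtain ⟨hv₁, hv₂⟩ := hv
    cases o <;> constructor <;> simp only [Bool.false_eq_true, if_true, if_false] <;> linarith
  obtain ⟨hlo, hhi⟩ := convex_combination_mem_Icc_one hweight (one_le_exp hε)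
  have hinv : 0 ≤ (exp ε + 1)⁻¹ := by positivity
  rw [harmonyProb_eq]
  exact ⟨le_mul_of_one_le_left hinv hlo, mul_le_mul_of_nonneg_right hhi hinv⟩

/-- The Harmony mechanism satisfies ε-local differential privacy. -/
theorem harmony_ldp (ε : ℝ) (hε : 0 < ε) (v1 v2 : ℝ)
    (hv1 : v1 ∈ Set.Icc (-1 : ℝ) 1) (hv2 : v2 ∈ Set.Icc (-1 : ℝ) 1) (o : Bool) :
    harmonyProb ε v1 o ≤ exp ε * harmonyProb ε v2 o :=
  le_mul_of_mem_Icc_mul (exp_pos ε).le (harmonyProb_mem_Icc hε.le hv1 o)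
    (harmonyProb_mem_Icc hε.le hv2 o)
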